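/- Let m > 1/2, b > 0 and c > 1. If x > 0 satisfies I_m(x/b)/I_{m−1}(x/b) = 1/c (the mode equation of the McKay Type I distribution with parameters m, b, c), then x > b·arctanh(1/c). -/

import Mathlib

/-!
Expanding `I_m(t) cosh t` and `I_{m-1}(t) sinh t` as `(t/2)^m` times power series in `(t/2)^2`,
the recurrences of the Bessel and hyperbolic coefficients give the exact identity
`2 (m + n) A_n = (2 n + 1) B_n` between their `n`-th coefficients, so `A_n < B_n` once `m > 1/2`.
Hence `I_m(t) / I_{m-1}(t) < tanh t`, and the mode equation gives `1/c < tanh (x/b)`.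
-/

open Real MeasureTheory

/-- Modified Bessel function of the first kind. -/
noncomputable def besselI (ν x : ℝ) : ℝ :=
  ∑' k : ℕ, (x / 2) ^ (ν + 2 * (k : ℝ)) / (Real.Gamma (ν + (k : ℝ) + 1) * (k.factorial : ℝ))

/-- The inverse hyperbolic tangent. -/
noncomputable def arctanh (y : ℝ) : ℝ := Real.log ((1 + y) / (1 - y)) / 2

open Finset
open scoped Nat

lemma Real.inv_Gamma_eq_mul_inv_Gamma_add_one (s : ℝ) :
    (Gamma s)⁻¹ = s * (Gamma (s + 1))⁻¹ := by
  rcases eq_or_ne s 0 with rfl | hs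
  · simp [Real.Gamma_zero]
  · rw [Real.Gamma_add_one hs, mul_inv, ← mul_assoc, mul_inv_cancel₀ hs, one_mul]

noncomputable def besselCoeff (ν : ℝ) (k : ℕ) : ℝ := (Gamma (ν + k + 1) * k !)⁻¹

lemma besselCoeff_sub_one (ν : ℝ) (k : ℕ) :
    besselCoeff (ν - 1) k = (ν + k) * besselCoeff ν k := by
  rw [besselCoeff, besselCoeff, show ν - 1 + k + 1 = ν + k by ring, mul_inv, mul_inv,
    Real.inv_Gamma_eq_mul_inv_Gamma_add_one (ν + k), mul_assoc]

lemma besselCoeff_succ (ν : ℝ) (k : ℕ) :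
    (k + 1) * (ν + k + 1) * besselCoeff ν (k + 1) = besselCoeff ν k := by
  simp only [besselCoeff, Nat.factorial_succ]
  push_cast
  rw [show ν + (k + 1) + 1 = ν + k + 1 + 1 by ring, mul_inv, mul_inv, mul_inv,
    Real.inv_Gamma_eq_mul_inv_Gamma_add_one (ν + k + 1)]
  field_simp

lemma besselCoeff_pos {ν : ℝ} (hν : -1 < ν) (k : ℕ) : 0 < besselCoeff ν k := by
  have : 0 < Gamma (ν + k + 1) := Real.Gamma_pos_of_pos (by linarith [k.cast_nonneg (α := ℝ)])
  unfold besselCoeff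
  positivity

lemma summable_besselCoeff_mul_pow {ν : ℝ} (hν : -1 < ν) (y : ℝ) :
    Summable fun k => besselCoeff ν k * y ^ k := by
  refine summable_of_ratio_norm_eventually_le (r := 1 / 2) (by norm_num) ?_
  filter_upwards [Filter.eventually_ge_atTop ⌈2 * |y|⌉₊] with k hk
  have hky : 2 * |y| ≤ k := Nat.ceil_le.mp hk
  have hD : 2 * |y| ≤ (k + 1) * (ν + k + 1) := by nlinarith
  have hrec := besselCoeff_succ ν k
  have hpos := besselCoeff_pos hν (k + 1)
  rw [norm_mul, norm_mul, norm_pow, norm_pow, Real.norm_of_nonneg hpos.le,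
    Real.norm_of_nonneg (besselCoeff_pos hν k).le, Real.norm_eq_abs, ← hrec, pow_succ]
  have := pow_nonneg (abs_nonneg y) k
  nlinarith [mul_le_mul_of_nonneg_left hD (mul_nonneg hpos.le this)]

lemma sum_antidiagonal_mul_pow {R : Type*} [CommSemiring R] (f g : ℕ → R) (y : R) (n : ℕ) :
    ∑ p ∈ antidiagonal n, f p.1 * y ^ p.1 * (g p.2 * y ^ p.2)
      = y ^ n * ∑ p ∈ antidiagonal n, f p.1 * g p.2 := by
  rw [mul_sum]
  refine sum_congr rfl fun p hp => ?_
  rw [← mem_antidiagonal.mp hp, pow_add]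
  ring

lemma add_mul_sum_antidiagonal_eq {μ : ℝ} {a c s : ℕ → ℝ}
    (ha : ∀ k : ℕ, (k + 1) * (μ + k + 1) * a (k + 1) = a k)
    (hcs : ∀ j : ℕ, c j = (2 * j + 1) * s j) (hc : ∀ j : ℕ, (j + 1) * c (j + 1) = 2 * s j)
    (n : ℕ) :
    (μ + n) * ∑ p ∈ antidiagonal n, a p.1 * c p.2
      = (2 * n + 1) * ∑ p ∈ antidiagonal n, (μ + p.1) * a p.1 * s p.2 := by
  have shift : ∀ N : ℕ, ∑ p ∈ antidiagonal N, (p.2 : ℝ) * (a p.1 * c p.2)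
      = 2 * ∑ p ∈ antidiagonal N, (p.1 : ℝ) * ((μ + p.1) * a p.1 * s p.2) := by
    -- both sides equal `2 * ∑ a k * s j` over the previous antidiagonal
    rintro (_ | N)
    · simp
    · rw [Nat.sum_antidiagonal_succ', Nat.sum_antidiagonal_succ, mul_add, mul_sum]
      push_cast
      simp only [zero_mul, zero_add, mul_zero]
      refine sum_congr rfl fun p _ => ?_
      linear_combination (-((p.2 : ℝ) + 1) * c (p.2 + 1)) * ha p.1
        + ((p.1 + 1) * (μ + p.1 + 1) * a (p.1 + 1)) * hc p.2
  calc (μ + n) * ∑ p ∈ antidiagonal n, a p.1 * c p.2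
      = ∑ p ∈ antidiagonal n, ((μ + p.1) * (a p.1 * c p.2) + p.2 * (a p.1 * c p.2)) := by
        rw [mul_sum]
        refine sum_congr rfl fun p hp => ?_
        rw [← mem_antidiagonal.mp hp]
        push_cast
        ring
    _ = ∑ p ∈ antidiagonal n, (2 * (p.1 + p.2 : ℕ) + 1) * ((μ + p.1) * a p.1 * s p.2) := by
        rw [sum_add_distrib, shift, mul_sum, ← sum_add_distrib]
        refine sum_congr rfl fun p _ => ?_
        rw [hcs]
        push_cast
        ring
    _ = _ := by
        rw [mul_sum]
        exact sum_congr rfl fun p hp => by rw [mem_antidiagonal.mp hp]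

lemma tsum_mul_tsum_lt_of_sum_antidiagonal_lt {f g f' g' : ℕ → ℝ} (hf : Summable f)
    (hg : Summable g) (hf' : Summable f') (hg' : Summable g')
    (h : ∀ n, ∑ p ∈ antidiagonal n, f p.1 * g p.2 ≤
      ∑ p ∈ antidiagonal n, f' p.1 * g' p.2) {n₀ : ℕ}
    (h₀ : ∑ p ∈ antidiagonal n₀, f p.1 * g p.2 <
      ∑ p ∈ antidiagonal n₀, f' p.1 * g' p.2) :
    (∑' n, f n) * (∑' n, g n) < (∑' n, f' n) * (∑' n, g' n) := by
  rw [← summable_norm_iff] at hf hg hf' hg'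
  rw [tsum_mul_tsum_eq_tsum_sum_antidiagonal_of_summable_norm hf hg,
    tsum_mul_tsum_eq_tsum_sum_antidiagonal_of_summable_norm hf' hg']
  exact Summable.tsum_lt_tsum h h₀
    (summable_norm_sum_mul_antidiagonal_of_summable_norm hf hg).of_norm
    (summable_norm_sum_mul_antidiagonal_of_summable_norm hf' hg').of_norm

lemma besselI_eq_rpow_mul_tsum (ν : ℝ) {x : ℝ} (hx : 0 < x) :
    besselI ν x = (x / 2) ^ ν * ∑' k, besselCoeff ν k * ((x / 2) ^ 2) ^ k := by
  rw [besselI, ← tsum_mul_left]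
  refine tsum_congr fun k => ?_
  rw [Real.rpow_add (by positivity), show 2 * (k : ℝ) = ((2 * k : ℕ) : ℝ) by push_cast; ring,
    Real.rpow_natCast, pow_mul, besselCoeff, div_eq_mul_inv]
  ring

lemma besselI_pos {ν x : ℝ} (hν : -1 < ν) (hx : 0 < x) : 0 < besselI ν x := by
  rw [besselI_eq_rpow_mul_tsum ν hx]
  refine mul_pos (by positivity) ((summable_besselCoeff_mul_pow hν _).tsum_pos
    (fun k => by have := besselCoeff_pos hν k; positivity) 0
    (by simpa using besselCoeff_pos hν 0))

lemma hasSum_cosh_half_sq (t : ℝ) :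
    HasSum (fun j : ℕ => 4 ^ j / (2 * j)! * ((t / 2) ^ 2) ^ j) (cosh t) := by
  convert Real.hasSum_cosh t using 2 with j
  rw [pow_mul, div_pow, div_pow]
  field_simp
  ring

lemma hasSum_sinh_half_sq (t : ℝ) :
    HasSum (fun j : ℕ => t / 2 * (2 * 4 ^ j / (2 * j + 1)! * ((t / 2) ^ 2) ^ j)) (sinh t) := by
  convert Real.hasSum_sinh t using 2 with j
  rw [pow_succ t, pow_mul, div_pow, div_pow]
  field_simp
  ring

lemma sum_antidiagonal_besselCoeff_lt {m : ℝ} (hm : 1 / 2 < m) (n : ℕ) :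
    ∑ p ∈ antidiagonal n, besselCoeff m p.1 * (4 ^ p.2 / (2 * p.2)!)
      < ∑ p ∈ antidiagonal n, besselCoeff (m - 1) p.1 * (2 * 4 ^ p.2 / (2 * p.2 + 1)!) := by
  have key := add_mul_sum_antidiagonal_eq (μ := m) (a := besselCoeff m)
    (c := fun j => 4 ^ j / (2 * j)!) (s := fun j => 4 ^ j / (2 * j + 1)!)
    (besselCoeff_succ m) (fun j => by rw [Nat.factorial_succ (2 * j)]; push_cast; field_simp)
    (fun j => by
      rw [show 2 * (j + 1) = 2 * j + 1 + 1 by ring, Nat.factorial_succ]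
      push_cast
      field_simp
      ring) n
  have hpos : 0 < ∑ p ∈ antidiagonal n, besselCoeff m p.1 * (4 ^ p.2 / (2 * p.2)!) :=
    sum_pos (fun p _ => mul_pos (besselCoeff_pos (by linarith) _) (by positivity))
      ⟨(0, n), by simp⟩
  have hrhs : ∑ p ∈ antidiagonal n, besselCoeff (m - 1) p.1 * (2 * 4 ^ p.2 / (2 * p.2 + 1)!)
      = 2 * ∑ p ∈ antidiagonal n,
          (m + p.1) * besselCoeff m p.1 * (4 ^ p.2 / (2 * p.2 + 1)!) := by
    rw [mul_sum]
    exact sum_congr rfl fun p _ => by rw [besselCoeff_sub_one]; ring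
  rw [hrhs]
  have hn : (0 : ℝ) ≤ n := n.cast_nonneg
  nlinarith

lemma besselI_mul_cosh_lt {m t : ℝ} (hm : 1 / 2 < m) (ht : 0 < t) :
    besselI m t * cosh t < besselI (m - 1) t * sinh t := by
  have hu : 0 < t / 2 := by positivity
  have hcoeff : ∀ n, ∑ p ∈ antidiagonal n,
      besselCoeff m p.1 * ((t / 2) ^ 2) ^ p.1 * (4 ^ p.2 / (2 * p.2)! * ((t / 2) ^ 2) ^ p.2)
      < ∑ p ∈ antidiagonal n, besselCoeff (m - 1) p.1 * ((t / 2) ^ 2) ^ p.1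
          * (2 * 4 ^ p.2 / (2 * p.2 + 1)! * ((t / 2) ^ 2) ^ p.2) := fun n => by
    rw [sum_antidiagonal_mul_pow (besselCoeff m) (fun j : ℕ => (4 : ℝ) ^ j / (2 * j)!),
      sum_antidiagonal_mul_pow (besselCoeff (m - 1))
        (fun j : ℕ => 2 * (4 : ℝ) ^ j / (2 * j + 1)!)]
    exact mul_lt_mul_of_pos_left (sum_antidiagonal_besselCoeff_lt hm n) (by positivity)
  have hsinh : Summable fun j : ℕ => 2 * 4 ^ j / (2 * j + 1)! * ((t / 2) ^ 2) ^ j :=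
    ((hasSum_sinh_half_sq t).summable.mul_left (t / 2)⁻¹).congr
      fun j => inv_mul_cancel_left₀ hu.ne' _
  have hseries := tsum_mul_tsum_lt_of_sum_antidiagonal_lt
    (summable_besselCoeff_mul_pow (ν := m) (by linarith) _) (hasSum_cosh_half_sq t).summable
    (summable_besselCoeff_mul_pow (ν := m - 1) (by linarith) _) hsinh
    (fun n => (hcoeff n).le) (hcoeff 0)
  calc besselI m t * cosh t
      = (t / 2) ^ (m - 1) * (t / 2 * ((∑' k, besselCoeff m k * ((t / 2) ^ 2) ^ k)
          * ∑' j, 4 ^ j / (2 * j)! * ((t / 2) ^ 2) ^ j)) := by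
        rw [besselI_eq_rpow_mul_tsum m ht, (hasSum_cosh_half_sq t).tsum_eq, ← mul_assoc,
          ← mul_assoc, ← Real.rpow_add_one hu.ne', sub_add_cancel]
    _ < (t / 2) ^ (m - 1) * (t / 2 * ((∑' k, besselCoeff (m - 1) k * ((t / 2) ^ 2) ^ k)
          * ∑' j, 2 * 4 ^ j / (2 * j + 1)! * ((t / 2) ^ 2) ^ j)) := by gcongr
    _ = besselI (m - 1) t * sinh t := by
        rw [besselI_eq_rpow_mul_tsum (m - 1) ht, ← (hasSum_sinh_half_sq t).tsum_eq, tsum_mul_left]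
        ring

lemma besselI_div_besselI_lt_tanh {m t : ℝ} (hm : 1 / 2 < m) (ht : 0 < t) :
    besselI m t / besselI (m - 1) t < tanh t := by
  rw [Real.tanh_eq_sinh_div_cosh, div_lt_div_iff₀ (besselI_pos (by linarith) ht) (cosh_pos t),
    mul_comm (sinh t)]
  exact besselI_mul_cosh_lt hm ht

lemma arctanh_lt_of_lt_tanh {y s : ℝ} (hy : -1 < y) (h : y < tanh s) : arctanh y < s := by
  have hy1 : y < 1 := h.trans (Real.tanh_lt_one s)
  rw [arctanh, ← one_div_mul_eq_div, ← Real.artanh_eq_half_log ⟨hy.le, hy1.le⟩]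
  simpa [Real.artanh_tanh] using Real.artanh_lt_artanh hy (Real.tanh_lt_one s) h

theorem stmt_17_general (m b c : ℝ) (hm : 1 / 2 < m) (hb : 0 < b) (x : ℝ) (hx : 0 < x)
    (hmode : besselI m (x / b) / besselI (m - 1) (x / b) = 1 / c) :
    x > b * arctanh (1 / c) := by
  have ht : 0 < x / b := div_pos hx hb
  have hratio_pos : 0 < besselI m (x / b) / besselI (m - 1) (x / b) :=
    div_pos (besselI_pos (by linarith) ht) (besselI_pos (by linarith) ht)
  have h := arctanh_lt_of_lt_tanh (by linarith) (besselI_div_besselI_lt_tanh hm ht)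
  rw [hmode] at h
  rwa [gt_iff_lt, ← lt_div_iff₀' hb]

theorem stmt_17 (m b c : ℝ) (hm : 1 / 2 < m) (hb : 0 < b) (hc : 1 < c) (x : ℝ) (hx : 0 < x)
    (hmode : besselI m (x / b) / besselI (m - 1) (x / b) = 1 / c) :
    x > b * arctanh (1 / c) :=
  stmt_17_general m b c hm hb x hx hmode
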